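/- arXiv:2504.06754 — 2 statements merged into one kernel-verified Lean document; each statement's English description precedes it below -/
import Mathlib

section
/- Let A and B be bounded linear operators on H, let α ≥ 0 and let r ≥ 1 be a real number. Then ber(A*B)^{2r} ≤ [1/(2(1+α))]·ber(A*B)^r·‖ |A|^{2r} + |B|^{2r} ‖_ber + [α/(4(1+α))]·‖ |A|^{4r} + |B|^{4r} ‖_ber + [α/(2(1+α))]·ber( |B|²·|A|² )^r, and moreover this right-hand side is at most [1/(2(1+α))]·ber(A*B)^r·‖ |A|^{2r} + |B|^{2r} ‖_ber + [α/(2(1+α))]·‖ |A|^{4r} + |B|^{4r} ‖_ber. -/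
open ContinuousLinearMap
open scoped InnerProductSpace

/-- The `t`-Berezin norm of `A` with respect to the family `k` of (normalized reproducing
kernel) vectors. -/
noncomputable def tber {E : Type*} [NormedAddCommGroup E] [InnerProductSpace ℂ E]
    [CompleteSpace E] {ι : Type*} (k : ι → E) (t : ℝ) (A : E →L[ℂ] E) : ℝ :=
  ⨆ p : ι × ι, (t * ‖⟪A (k p.1), k p.2⟫_ℂ‖ + (1 - t) * ‖⟪adjoint A (k p.1), k p.2⟫_ℂ‖)

/-- The Berezin norm of `A` with respect to the family `k`. -/
noncomputable def berNorm {E : Type*} [NormedAddCommGroup E] [InnerProductSpace ℂ E]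
    {ι : Type*} (k : ι → E) (A : E →L[ℂ] E) : ℝ :=
  ⨆ p : ι × ι, ‖⟪A (k p.1), k p.2⟫_ℂ‖

/-- The Berezin number of `A` with respect to the family `k`. -/
noncomputable def berNum {E : Type*} [NormedAddCommGroup E] [InnerProductSpace ℂ E]
    {ι : Type*} (k : ι → E) (A : E →L[ℂ] E) : ℝ :=
  ⨆ l : ι, ‖⟪A (k l), k l⟫_ℂ‖

/-- The modulus `|A| = (A*A)^(1/2)` of an operator, via the continuous functional calculus. -/
noncomputable def absOp {H : Type*} [NormedAddCommGroup H] [InnerProductSpace ℂ H]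
    [CompleteSpace H] (A : H →L[ℂ] H) : H →L[ℂ] H :=
  cfc Real.sqrt (adjoint A * A)

/-- Real powers of a (positive) operator via the continuous functional calculus. -/
noncomputable def rpowOp {H : Type*} [NormedAddCommGroup H] [InnerProductSpace ℂ H]
    [CompleteSpace H] (A : H →L[ℂ] H) (r : ℝ) : H →L[ℂ] H :=
  cfc (fun x : ℝ => x ^ r) A

/-! ### Scalar auxiliary lemmas -/

lemma tangent_line {s t p : ℝ} (hs : 0 ≤ s) (ht : 0 ≤ t) (hp : 1 ≤ p) :
    s ^ p + p * s ^ (p - 1) * (t - s) ≤ t ^ p := by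
  rcases eq_or_lt_of_le hp with hp1 | hp1
  · simp [← hp1, Real.rpow_one]
  rcases eq_or_lt_of_le hs with hs0 | hs0
  · rw [← hs0]
    rw [Real.zero_rpow (by positivity), Real.zero_rpow (by linarith [hp1] : p - 1 ≠ 0)]
    simpa using Real.rpow_nonneg ht p
  · have key := one_add_mul_self_le_rpow_one_add
      (s := t / s - 1) (by have := div_nonneg ht hs0.le; linarith) hp
    have h1 : (1 : ℝ) + (t / s - 1) = t / s := by ring
    rw [h1] at key
    have hsp : (0:ℝ) < s ^ p := Real.rpow_pos_of_pos hs0 p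
    have hmul := mul_le_mul_of_nonneg_left key hsp.le
    have hdiv : s ^ p * (t / s) ^ p = t ^ p := by
      rw [Real.div_rpow ht hs0.le, mul_div_cancel₀]
      exact (Real.rpow_pos_of_pos hs0 p).ne'
    have hsub : s ^ (p - 1) = s ^ p / s := by
      rw [Real.rpow_sub hs0, Real.rpow_one]
    calc s ^ p + p * s ^ (p - 1) * (t - s)
        = s ^ p * (1 + p * (t / s - 1)) := by rw [hsub]; field_simp
      _ ≤ s ^ p * (t / s) ^ p := hmul
      _ = t ^ p := hdiv

lemma convex2 {w w' x y p : ℝ} (hw : 0 ≤ w) (hw' : 0 ≤ w') (hww : w + w' = 1)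
    (hx : 0 ≤ x) (hy : 0 ≤ y) (hp : 1 ≤ p) :
    (w * x + w' * y) ^ p ≤ w * x ^ p + w' * y ^ p := by
  set m := w * x + w' * y with hm
  have hm0 : 0 ≤ m := by positivity
  have h1 := tangent_line hm0 hx hp
  have h2 := tangent_line hm0 hy hp
  have e1 := mul_le_mul_of_nonneg_left h1 hw
  have e2 := mul_le_mul_of_nonneg_left h2 hw'
  have hsum : w * (m ^ p + p * m ^ (p - 1) * (x - m)) +
      w' * (m ^ p + p * m ^ (p - 1) * (y - m)) = m ^ p := by
    have h3 : (w + w') * m ^ p + p * m ^ (p - 1) * ((w * x + w' * y) - (w + w') * m)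
        = m ^ p := by rw [hww, ← hm]; ring
    linarith [h3, (by ring : w * (m ^ p + p * m ^ (p - 1) * (x - m)) +
      w' * (m ^ p + p * m ^ (p - 1) * (y - m)) =
      (w + w') * m ^ p + p * m ^ (p - 1) * ((w * x + w' * y) - (w + w') * m))]
  linarith

lemma half_convex {x y p : ℝ} (hx : 0 ≤ x) (hy : 0 ≤ y) (hp : 1 ≤ p) :
    ((x + y) / 2) ^ p ≤ (x ^ p + y ^ p) / 2 := by
  have h := convex2 (by norm_num : (0:ℝ) ≤ 1/2) (by norm_num : (0:ℝ) ≤ 1/2)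
    (by norm_num) hx hy hp
  calc ((x + y) / 2) ^ p = (1/2 * x + 1/2 * y) ^ p := by ring_nf
    _ ≤ 1/2 * x ^ p + 1/2 * y ^ p := h
    _ = (x ^ p + y ^ p) / 2 := by ring

/-- Buzano's inequality. -/
lemma buzano {H : Type*} [NormedAddCommGroup H] [InnerProductSpace ℂ H]
    (x y e : H) (he : ‖e‖ = 1) :
    ‖⟪x, e⟫_ℂ * ⟪e, y⟫_ℂ‖ ≤ (‖x‖ * ‖y‖ + ‖⟪x, y⟫_ℂ‖) / 2 := by
  set c : ℂ := ⟪e, x⟫_ℂ with hc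
  set w : H := (2 * c) • e - x with hw
  have hnw : ‖w‖ = ‖x‖ := by
    have h1 : ‖w‖ ^ 2 = ‖x‖ ^ 2 := by
      have hre : RCLike.re ((starRingEnd ℂ) (2 * c) * c) = 2 * ‖c‖ ^ 2 := by
        have h : (starRingEnd ℂ) (2 * c) * c = ((2 * ‖c‖ ^ 2 : ℝ) : ℂ) := by
          rw [map_mul, mul_assoc, RCLike.conj_mul]
          push_cast
          simp [Complex.ext_iff]
        rw [h]
        norm_cast
      rw [hw, @norm_sub_sq ℂ, norm_smul, he, inner_smul_left, ← hc, hre, norm_mul]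
      simp
      ring
    nlinarith [norm_nonneg w, norm_nonneg x]
  have hiw : ⟪w, y⟫_ℂ = (starRingEnd ℂ) (2 * c) * ⟪e, y⟫_ℂ - ⟪x, y⟫_ℂ := by
    rw [hw, inner_sub_left, inner_smul_left]
  have hcs := norm_inner_le_norm (𝕜 := ℂ) w y
  rw [hnw] at hcs
  have hkey : ‖(2 : ℂ) * (⟪x, e⟫_ℂ * ⟪e, y⟫_ℂ)‖ ≤ ‖⟪x, y⟫_ℂ‖ + ‖x‖ * ‖y‖ := by
    have heq : (2 : ℂ) * (⟪x, e⟫_ℂ * ⟪e, y⟫_ℂ) = ⟪w, y⟫_ℂ + ⟪x, y⟫_ℂ := by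
      rw [hiw, map_mul, hc]
      rw [inner_conj_symm]
      have h2 : (starRingEnd ℂ) (2:ℂ) = 2 := by simp [Complex.ext_iff]
      rw [h2]
      ring
    rw [heq]
    calc ‖⟪w, y⟫_ℂ + ⟪x, y⟫_ℂ‖ ≤ ‖⟪w, y⟫_ℂ‖ + ‖⟪x, y⟫_ℂ‖ := norm_add_le _ _
      _ ≤ ‖x‖ * ‖y‖ + ‖⟪x, y⟫_ℂ‖ := by linarith
      _ = ‖⟪x, y⟫_ℂ‖ + ‖x‖ * ‖y‖ := by ring
  rw [norm_mul] at hkey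
  simp only [Complex.norm_ofNat] at hkey
  linarith

/-! ### Operator auxiliary lemmas -/

section OpLemmas

variable {H : Type*} [NormedAddCommGroup H] [InnerProductSpace ℂ H] [CompleteSpace H]

lemma re_inner_le_of_le {S S' : H →L[ℂ] H} (h : S ≤ S') (x : H) :
    (⟪S x, x⟫_ℂ).re ≤ (⟪S' x, x⟫_ℂ).re := by
  have h2 := ((ContinuousLinearMap.le_def S S').mp h).inner_nonneg_left x
  rw [ContinuousLinearMap.sub_apply, inner_sub_left] at h2
  have h3 := (Complex.le_def.mp h2).1
  simp only [Complex.zero_re, Complex.sub_re] at h3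
  linarith

/-- The McCarthy-type (operator Jensen) inequality for powers of a positive operator. -/
lemma mccarthy (T : H →L[ℂ] H) (hT : 0 ≤ T) (n : ℕ) (hn : 0 < n) {p : ℝ} (hp : 1 ≤ p)
    (k : H) (hk : ‖k‖ = 1) :
    (⟪(T ^ n) k, k⟫_ℂ).re ^ p ≤ (⟪cfc (fun x : ℝ => x ^ ((n : ℝ) * p)) T k, k⟫_ℂ).re := by
  have hsa : IsSelfAdjoint T := .of_nonneg hT
  have hspec : ∀ x ∈ spectrum ℝ T, (0:ℝ) ≤ x := fun x hx => spectrum_nonneg_of_nonneg hT hx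
  have hTn : (0 : H →L[ℂ] H) ≤ T ^ n := by
    rw [← cfc_pow_id (R := ℝ) T n hsa]
    exact cfc_nonneg (fun x hx => pow_nonneg (hspec x hx) n)
  set s : ℝ := (⟪(T ^ n) k, k⟫_ℂ).re with hsdef
  have hs0 : 0 ≤ s := by
    have := ((ContinuousLinearMap.nonneg_iff_isPositive _).mp hTn).inner_nonneg_left k
    simpa [hsdef] using (Complex.le_def.mp this).1
  set c1 : ℝ := p * s ^ (p - 1) with hc1
  have key : ∀ x ∈ spectrum ℝ T, (s ^ p - c1 * s) + c1 * x ^ n ≤ x ^ ((n:ℝ) * p) := by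
    intro x hx
    have hx0 := hspec x hx
    have ht0 : (0:ℝ) ≤ x ^ n := pow_nonneg hx0 n
    have htan := tangent_line hs0 ht0 hp
    have hxnp : x ^ ((n:ℝ) * p) = (x ^ n) ^ p := by
      rw [Real.rpow_mul hx0, Real.rpow_natCast]
    rw [hxnp]
    have : (s ^ p - c1 * s) + c1 * x ^ n = s ^ p + p * s ^ (p-1) * (x ^ n - s) := by
      rw [hc1]; ring
    rw [this]; exact htan
  have hcont : ContinuousOn (fun x : ℝ => x ^ ((n:ℝ) * p)) (spectrum ℝ T) := by
    have : Continuous (fun x : ℝ => x ^ ((n:ℝ) * p)) := by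
      rw [continuous_iff_continuousAt]
      intro x
      exact Real.continuousAt_rpow_const x _ (Or.inr (by positivity))
    exact this.continuousOn
  have hop : cfc (fun x : ℝ => (s ^ p - c1 * s) + c1 * x ^ n) T
      ≤ cfc (fun x : ℝ => x ^ ((n:ℝ) * p)) T := cfc_mono key (by fun_prop) hcont
  have hdecomp : cfc (fun x : ℝ => (s ^ p - c1 * s) + c1 * x ^ n) T
      = algebraMap ℝ (H →L[ℂ] H) (s ^ p - c1 * s) + c1 • T ^ n := by
    rw [cfc_add (a := T) (fun _ => s ^ p - c1 * s) (fun x => c1 * x ^ n) (by fun_prop)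
      (by fun_prop), cfc_const _ _ hsa, cfc_const_mul c1 (fun x : ℝ => x ^ n) T (by fun_prop),
      cfc_pow_id T n hsa]
  have heval : (⟪(cfc (fun x : ℝ => (s ^ p - c1 * s) + c1 * x ^ n) T) k, k⟫_ℂ).re = s ^ p := by
    rw [hdecomp]
    have h1 : algebraMap ℝ (H →L[ℂ] H) (s ^ p - c1 * s) = (s ^ p - c1 * s) • 1 :=
      Algebra.algebraMap_eq_smul_one _
    rw [h1]
    have happ : (((s ^ p - c1 * s) • (1 : H →L[ℂ] H)) + c1 • T ^ n) k
        = (s ^ p - c1 * s) • k + c1 • ((T ^ n) k) := by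
      simp
    rw [happ, inner_add_left]
    have hkk : ⟪k, k⟫_ℂ = 1 := by
      rw [inner_self_eq_norm_sq_to_K, hk]; norm_num
    have e1 : (⟪(s ^ p - c1 * s) • k, k⟫_ℂ).re = (s ^ p - c1 * s) * (⟪k, k⟫_ℂ).re := by
      rw [RCLike.real_smul_eq_coe_smul (K := ℂ), inner_smul_left]
      simp [Complex.mul_re]
    have e2 : (⟪c1 • ((T ^ n) k), k⟫_ℂ).re = c1 * s := by
      rw [RCLike.real_smul_eq_coe_smul (K := ℂ), inner_smul_left]
      simp [Complex.mul_re, ← hsdef]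
      left; simp [hsdef]
    rw [Complex.add_re, e1, e2, hkk]
    simp only [Complex.one_re, mul_one]
    ring
  calc s ^ p = (⟪(cfc (fun x : ℝ => (s ^ p - c1 * s) + c1 * x ^ n) T) k, k⟫_ℂ).re :=
        heval.symm
    _ ≤ _ := re_inner_le_of_le hop k

lemma mccarthy_rpowOp (T : H →L[ℂ] H) (hT : 0 ≤ T) (n : ℕ) (hn : 0 < n) {p : ℝ} (hp : 1 ≤ p)
    (k : H) (hk : ‖k‖ = 1) :
    (⟪(T ^ n) k, k⟫_ℂ).re ^ p ≤ (⟪rpowOp T ((n : ℝ) * p) k, k⟫_ℂ).re := by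
  unfold rpowOp
  exact mccarthy T hT n hn hp k hk

lemma adjoint_mul_self_nonneg (A : H →L[ℂ] H) : (0 : H →L[ℂ] H) ≤ adjoint A * A := by
  rw [← ContinuousLinearMap.star_eq_adjoint]; exact star_mul_self_nonneg A

lemma absOp_nonneg (A : H →L[ℂ] H) : (0 : H →L[ℂ] H) ≤ absOp A :=
  cfc_nonneg fun x _ => Real.sqrt_nonneg x

lemma absOp_sq (A : H →L[ℂ] H) : (absOp A) ^ 2 = adjoint A * A := by
  have ha := adjoint_mul_self_nonneg A
  have hsa : IsSelfAdjoint (adjoint A * A) := .of_nonneg ha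
  unfold absOp
  rw [← cfc_pow (R := ℝ) Real.sqrt 2 _ (by fun_prop) hsa]
  have heq : (spectrum ℝ (adjoint A * A)).EqOn (fun x => Real.sqrt x ^ 2) id :=
    fun x hx => Real.sq_sqrt (spectrum_nonneg_of_nonneg ha hx)
  rw [cfc_congr heq, cfc_id ℝ _ hsa]

lemma absOp_sq_selfAdjoint (A : H →L[ℂ] H) : IsSelfAdjoint ((absOp A) ^ 2) := by
  rw [absOp_sq]; exact .of_nonneg (adjoint_mul_self_nonneg A)

lemma inner_adjoint_mul (A B : H →L[ℂ] H) (x y : H) :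
    ⟪(adjoint A * B) x, y⟫_ℂ = ⟪B x, A y⟫_ℂ := by
  rw [ContinuousLinearMap.mul_apply, ContinuousLinearMap.adjoint_inner_left]

lemma inner_selfadjoint_sq (P : H →L[ℂ] H) (hP : IsSelfAdjoint P) (x y : H) :
    ⟪(P * P) x, y⟫_ℂ = ⟪P x, P y⟫_ℂ := by
  have hadj : adjoint P = P := by rw [← ContinuousLinearMap.star_eq_adjoint]; exact hP
  rw [ContinuousLinearMap.mul_apply]
  conv_lhs => rw [← hadj]
  rw [ContinuousLinearMap.adjoint_inner_left, hadj]

lemma inner_absOp_sq (A : H →L[ℂ] H) (e : H) :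
    ⟪((absOp A) ^ 2) e, e⟫_ℂ = ((‖A e‖ : ℂ)) ^ 2 := by
  rw [absOp_sq, inner_adjoint_mul, inner_self_eq_norm_sq_to_K]
  norm_cast

lemma inner_absOp_pow4 (A : H →L[ℂ] H) (e : H) :
    ⟪((absOp A) ^ 4) e, e⟫_ℂ = ((‖((absOp A) ^ 2) e‖ : ℂ)) ^ 2 := by
  have hP := absOp_sq_selfAdjoint A
  have h4 : (absOp A) ^ 4 = ((absOp A) ^ 2) * ((absOp A) ^ 2) := by
    rw [← pow_add]
  rw [h4, inner_selfadjoint_sq _ hP, inner_self_eq_norm_sq_to_K]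
  norm_cast

lemma inner_mixed (A B : H →L[ℂ] H) (e : H) :
    ⟪((absOp B) ^ 2 * (absOp A) ^ 2) e, e⟫_ℂ = ⟪((absOp A) ^ 2) e, ((absOp B) ^ 2) e⟫_ℂ := by
  have hadj : adjoint ((absOp B) ^ 2) = (absOp B) ^ 2 := by
    rw [← ContinuousLinearMap.star_eq_adjoint]; exact absOp_sq_selfAdjoint B
  rw [ContinuousLinearMap.mul_apply]
  conv_lhs => rw [← hadj]
  rw [ContinuousLinearMap.adjoint_inner_left]

/-! ### Berezin number and norm basic facts -/

lemma inner_norm_le (T : H →L[ℂ] H) (x y : H) (hx : ‖x‖ = 1) (hy : ‖y‖ = 1) :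
    ‖⟪T x, y⟫_ℂ‖ ≤ ‖T‖ := by
  calc ‖⟪T x, y⟫_ℂ‖ ≤ ‖T x‖ * ‖y‖ := norm_inner_le_norm _ _
    _ ≤ (‖T‖ * ‖x‖) * ‖y‖ := by gcongr; exact T.le_opNorm x
    _ = ‖T‖ := by rw [hx, hy]; ring

lemma le_berNum {ι : Type*} (k : ι → H) (hk : ∀ l, ‖k l‖ = 1) (T : H →L[ℂ] H) (l : ι) :
    ‖⟪T (k l), k l⟫_ℂ‖ ≤ berNum k T := by
  apply le_ciSup (f := fun l => ‖⟪T (k l), k l⟫_ℂ‖)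
  exact ⟨‖T‖, Set.forall_mem_range.mpr fun l => inner_norm_le T _ _ (hk l) (hk l)⟩

lemma le_berNorm {ι : Type*} (k : ι → H) (hk : ∀ l, ‖k l‖ = 1) (T : H →L[ℂ] H) (l : ι) :
    ‖⟪T (k l), k l⟫_ℂ‖ ≤ berNorm k T := by
  apply le_ciSup (f := fun p : ι × ι => ‖⟪T (k p.1), k p.2⟫_ℂ‖) (c := (l, l))
  exact ⟨‖T‖, Set.forall_mem_range.mpr fun p => inner_norm_le T _ _ (hk p.1) (hk p.2)⟩

lemma berNum_nonneg {ι : Type*} (k : ι → H) (T : H →L[ℂ] H) : 0 ≤ berNum k T :=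
  Real.iSup_nonneg fun _ => norm_nonneg _

lemma berNorm_nonneg {ι : Type*} (k : ι → H) (T : H →L[ℂ] H) : 0 ≤ berNorm k T :=
  Real.iSup_nonneg fun _ => norm_nonneg _

lemma berNum_rpow_le {ι : Type*} [Nonempty ι] (k : ι → H) (T : H →L[ℂ] H) {q C : ℝ}
    (hq : 0 < q) (hC : 0 ≤ C)
    (h : ∀ l, ‖⟪T (k l), k l⟫_ℂ‖ ^ q ≤ C) : berNum k T ^ q ≤ C := by
  have h1 : ∀ l, ‖⟪T (k l), k l⟫_ℂ‖ ≤ C ^ (1 / q) := by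
    intro l
    have h0 : (0:ℝ) ≤ ‖⟪T (k l), k l⟫_ℂ‖ := norm_nonneg _
    calc ‖⟪T (k l), k l⟫_ℂ‖ = (‖⟪T (k l), k l⟫_ℂ‖ ^ q) ^ (1 / q) := by
          rw [← Real.rpow_mul h0, mul_one_div_cancel hq.ne', Real.rpow_one]
      _ ≤ C ^ (1 / q) := Real.rpow_le_rpow (Real.rpow_nonneg h0 q) (h l) (by positivity)
  have h2 : berNum k T ≤ C ^ (1 / q) := ciSup_le h1
  calc berNum k T ^ q ≤ (C ^ (1 / q)) ^ q :=
        Real.rpow_le_rpow (berNum_nonneg k T) h2 hq.le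
    _ = C := by rw [← Real.rpow_mul hC, one_div_mul_cancel hq.ne', Real.rpow_one]

end OpLemmas

set_option maxHeartbeats 2000000 in
theorem stmt17 {H : Type*} [NormedAddCommGroup H] [InnerProductSpace ℂ H] [CompleteSpace H]
    {Ω : Type*} [Nonempty Ω] (k : Ω → H) (hk : ∀ l, ‖k l‖ = 1)
    (A B : H →L[ℂ] H) (α : ℝ) (hα : 0 ≤ α) (r : ℝ) (hr : 1 ≤ r) :
    berNum k (adjoint A * B) ^ (2 * r) ≤
      1 / (2 * (1 + α)) * berNum k (adjoint A * B) ^ r *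
        berNorm k (rpowOp (absOp A) (2 * r) + rpowOp (absOp B) (2 * r)) +
      α / (4 * (1 + α)) * berNorm k (rpowOp (absOp A) (4 * r) + rpowOp (absOp B) (4 * r)) +
      α / (2 * (1 + α)) * berNum k ((absOp B) ^ 2 * (absOp A) ^ 2) ^ r ∧
    1 / (2 * (1 + α)) * berNum k (adjoint A * B) ^ r *
        berNorm k (rpowOp (absOp A) (2 * r) + rpowOp (absOp B) (2 * r)) +
      α / (4 * (1 + α)) * berNorm k (rpowOp (absOp A) (4 * r) + rpowOp (absOp B) (4 * r)) +
      α / (2 * (1 + α)) * berNum k ((absOp B) ^ 2 * (absOp A) ^ 2) ^ r ≤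
    1 / (2 * (1 + α)) * berNum k (adjoint A * B) ^ r *
        berNorm k (rpowOp (absOp A) (2 * r) + rpowOp (absOp B) (2 * r)) +
      α / (2 * (1 + α)) * berNorm k (rpowOp (absOp A) (4 * r) + rpowOp (absOp B) (4 * r)) := by
  have hr0 : (0:ℝ) ≤ r := le_trans zero_le_one hr
  have h1a : (0:ℝ) < 1 + α := by linarith
  set N : ℝ := berNum k (adjoint A * B) with hN
  set M2 : ℝ := berNorm k (rpowOp (absOp A) (2 * r) + rpowOp (absOp B) (2 * r)) with hM2
  set M4 : ℝ := berNorm k (rpowOp (absOp A) (4 * r) + rpowOp (absOp B) (4 * r)) with hM4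
  set V : ℝ := berNum k ((absOp B) ^ 2 * (absOp A) ^ 2) with hV
  have hN0 : 0 ≤ N := berNum_nonneg k _
  have hM20 : 0 ≤ M2 := berNorm_nonneg k _
  have hM40 : 0 ≤ M4 := berNorm_nonneg k _
  have hV0 : 0 ≤ V := berNum_nonneg k _
  have hNr0 : 0 ≤ N ^ r := Real.rpow_nonneg hN0 r
  have hVr0 : 0 ≤ V ^ r := Real.rpow_nonneg hV0 r
  -- the fundamental fourth-power bound
  have hD : ∀ l, (‖((absOp A) ^ 2) (k l)‖ * ‖((absOp B) ^ 2) (k l)‖) ^ r ≤ M4 / 2 := by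
    intro l
    have hmA : (‖((absOp A) ^ 2) (k l)‖ ^ 2) ^ r ≤
        (⟪rpowOp (absOp A) (4 * r) (k l), k l⟫_ℂ).re := by
      have h := mccarthy_rpowOp (absOp A) (absOp_nonneg A) 4 (by norm_num) hr (k l) (hk l)
      have h4 : ((4:ℕ):ℝ) * r = 4 * r := by norm_num
      rw [h4] at h
      have hre : (⟪((absOp A) ^ 4) (k l), k l⟫_ℂ).re = ‖((absOp A) ^ 2) (k l)‖ ^ 2 := by
        rw [inner_absOp_pow4]; norm_cast
      rwa [hre] at h
    have hmB : (‖((absOp B) ^ 2) (k l)‖ ^ 2) ^ r ≤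
        (⟪rpowOp (absOp B) (4 * r) (k l), k l⟫_ℂ).re := by
      have h := mccarthy_rpowOp (absOp B) (absOp_nonneg B) 4 (by norm_num) hr (k l) (hk l)
      have h4 : ((4:ℕ):ℝ) * r = 4 * r := by norm_num
      rw [h4] at h
      have hre : (⟪((absOp B) ^ 4) (k l), k l⟫_ℂ).re = ‖((absOp B) ^ 2) (k l)‖ ^ 2 := by
        rw [inner_absOp_pow4]; norm_cast
      rwa [hre] at h
    have hsum : (⟪rpowOp (absOp A) (4 * r) (k l), k l⟫_ℂ).re +
        (⟪rpowOp (absOp B) (4 * r) (k l), k l⟫_ℂ).re ≤ M4 := by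
      have heq : (⟪rpowOp (absOp A) (4 * r) (k l), k l⟫_ℂ).re +
          (⟪rpowOp (absOp B) (4 * r) (k l), k l⟫_ℂ).re =
          (⟪(rpowOp (absOp A) (4 * r) + rpowOp (absOp B) (4 * r)) (k l), k l⟫_ℂ).re := by
        rw [ContinuousLinearMap.add_apply, inner_add_left, Complex.add_re]
      rw [heq]
      calc (⟪(rpowOp (absOp A) (4 * r) + rpowOp (absOp B) (4 * r)) (k l), k l⟫_ℂ).re
          ≤ ‖⟪(rpowOp (absOp A) (4 * r) + rpowOp (absOp B) (4 * r)) (k l), k l⟫_ℂ‖ :=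
            Complex.re_le_norm _
        _ ≤ M4 := le_berNorm k hk _ l
    calc (‖((absOp A) ^ 2) (k l)‖ * ‖((absOp B) ^ 2) (k l)‖) ^ r
        ≤ ((‖((absOp A) ^ 2) (k l)‖ ^ 2 + ‖((absOp B) ^ 2) (k l)‖ ^ 2) / 2) ^ r := by
          apply Real.rpow_le_rpow (by positivity) _ hr0
          nlinarith [sq_nonneg (‖((absOp A) ^ 2) (k l)‖ - ‖((absOp B) ^ 2) (k l)‖)]
      _ ≤ ((‖((absOp A) ^ 2) (k l)‖ ^ 2) ^ r + (‖((absOp B) ^ 2) (k l)‖ ^ 2) ^ r) / 2 :=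
          half_convex (by positivity) (by positivity) hr
      _ ≤ ((⟪rpowOp (absOp A) (4 * r) (k l), k l⟫_ℂ).re +
            (⟪rpowOp (absOp B) (4 * r) (k l), k l⟫_ℂ).re) / 2 := by linarith
      _ ≤ M4 / 2 := by linarith
  -- v^r bound
  have hVr : V ^ r ≤ M4 / 2 := by
    rw [hV]
    apply berNum_rpow_le k _ (by linarith : (0:ℝ) < r) (by linarith)
    intro l
    rw [inner_mixed]
    calc ‖⟪((absOp A) ^ 2) (k l), ((absOp B) ^ 2) (k l)⟫_ℂ‖ ^ r
        ≤ (‖((absOp A) ^ 2) (k l)‖ * ‖((absOp B) ^ 2) (k l)‖) ^ r :=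
          Real.rpow_le_rpow (norm_nonneg _) (norm_inner_le_norm _ _) hr0
      _ ≤ M4 / 2 := hD l
  constructor
  · -- main inequality
    apply berNum_rpow_le k _ (by linarith : (0:ℝ) < 2 * r)
    · have t1 : 0 ≤ 1 / (2 * (1 + α)) * N ^ r * M2 := by positivity
      have t2 : 0 ≤ α / (4 * (1 + α)) * M4 := by positivity
      have t3 : 0 ≤ α / (2 * (1 + α)) * V ^ r := by positivity
      linarith
    intro l
    set c : ℝ := ‖⟪(adjoint A * B) (k l), k l⟫_ℂ‖ with hc
    have hc0 : 0 ≤ c := norm_nonneg _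
    set sa : ℝ := ‖A (k l)‖ with hsa
    set sb : ℝ := ‖B (k l)‖ with hsb
    have hsa0 : 0 ≤ sa := norm_nonneg _
    have hsb0 : 0 ≤ sb := norm_nonneg _
    have hc_le : c ≤ sa * sb := by
      rw [hc, inner_adjoint_mul]
      calc ‖⟪B (k l), A (k l)⟫_ℂ‖ ≤ ‖B (k l)‖ * ‖A (k l)‖ := norm_inner_le_norm _ _
        _ = sa * sb := by rw [hsa, hsb]; ring
    -- inner product identities
    have hA1 : ⟪((absOp A) ^ 2) (k l), k l⟫_ℂ = ((sa ^ 2 : ℝ) : ℂ) := by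
      rw [inner_absOp_sq]; push_cast; rw [hsa]
    have hB1 : ⟪((absOp B) ^ 2) (k l), k l⟫_ℂ = ((sb ^ 2 : ℝ) : ℂ) := by
      rw [inner_absOp_sq]; push_cast; rw [hsb]
    -- Buzano
    set D : ℝ := ‖((absOp A) ^ 2) (k l)‖ * ‖((absOp B) ^ 2) (k l)‖ with hDdef
    set v : ℝ := ‖⟪((absOp A) ^ 2) (k l), ((absOp B) ^ 2) (k l)⟫_ℂ‖ with hvdef
    have hD0 : 0 ≤ D := by positivity
    have hv0 : 0 ≤ v := norm_nonneg _
    have hab : sa ^ 2 * sb ^ 2 ≤ (D + v) / 2 := by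
      have hbz := buzano (((absOp A) ^ 2) (k l)) (((absOp B) ^ 2) (k l)) (k l) (hk l)
      have hprod : ‖⟪((absOp A) ^ 2) (k l), k l⟫_ℂ * ⟪k l, ((absOp B) ^ 2) (k l)⟫_ℂ‖
          = sa ^ 2 * sb ^ 2 := by
        rw [← inner_conj_symm (k l) (((absOp B) ^ 2) (k l))]
        rw [hA1, hB1, Complex.conj_ofReal, ← Complex.ofReal_mul]
        rw [Complex.norm_real]
        exact abs_of_nonneg (by positivity)
      rw [hprod] at hbz
      exact hbz
    -- v ≤ V
    have hvV : v ≤ V := by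
      rw [hvdef, ← inner_mixed, hV]
      exact le_berNum k hk _ l
    -- McCarthy for exponent 2r
    have hmA2 : (sa ^ 2) ^ r ≤ (⟪rpowOp (absOp A) (2 * r) (k l), k l⟫_ℂ).re := by
      have h := mccarthy_rpowOp (absOp A) (absOp_nonneg A) 2 (by norm_num) hr (k l) (hk l)
      have h2 : ((2:ℕ):ℝ) * r = 2 * r := by norm_num
      rw [h2] at h
      have hre : (⟪((absOp A) ^ 2) (k l), k l⟫_ℂ).re = sa ^ 2 := by
        rw [hA1]; norm_cast
      rwa [hre] at h
    have hmB2 : (sb ^ 2) ^ r ≤ (⟪rpowOp (absOp B) (2 * r) (k l), k l⟫_ℂ).re := by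
      have h := mccarthy_rpowOp (absOp B) (absOp_nonneg B) 2 (by norm_num) hr (k l) (hk l)
      have h2 : ((2:ℕ):ℝ) * r = 2 * r := by norm_num
      rw [h2] at h
      have hre : (⟪((absOp B) ^ 2) (k l), k l⟫_ℂ).re = sb ^ 2 := by
        rw [hB1]; norm_cast
      rwa [hre] at h
    have hsum2 : (⟪rpowOp (absOp A) (2 * r) (k l), k l⟫_ℂ).re +
        (⟪rpowOp (absOp B) (2 * r) (k l), k l⟫_ℂ).re ≤ M2 := by
      have heq : (⟪rpowOp (absOp A) (2 * r) (k l), k l⟫_ℂ).re +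
          (⟪rpowOp (absOp B) (2 * r) (k l), k l⟫_ℂ).re =
          (⟪(rpowOp (absOp A) (2 * r) + rpowOp (absOp B) (2 * r)) (k l), k l⟫_ℂ).re := by
        rw [ContinuousLinearMap.add_apply, inner_add_left, Complex.add_re]
      rw [heq]
      calc (⟪(rpowOp (absOp A) (2 * r) + rpowOp (absOp B) (2 * r)) (k l), k l⟫_ℂ).re
          ≤ ‖⟪(rpowOp (absOp A) (2 * r) + rpowOp (absOp B) (2 * r)) (k l), k l⟫_ℂ‖ :=
            Complex.re_le_norm _
        _ ≤ M2 := le_berNorm k hk _ l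
    -- c ≤ N
    have hcN : c ≤ N := by rw [hc, hN]; exact le_berNum k hk _ l
    have hcNr : c ^ r ≤ N ^ r := Real.rpow_le_rpow hc0 hcN hr0
    -- weighted split
    have w1 : (0:ℝ) ≤ 1 / (1 + α) := by positivity
    have w2 : (0:ℝ) ≤ α / (1 + α) := by positivity
    have hww : 1 / (1 + α) + α / (1 + α) = 1 := by field_simp
    have t1 : c ^ 2 ≤ c * ((sa ^ 2 + sb ^ 2) / 2) := by nlinarith [sq_nonneg (sa - sb)]
    have hcab : c ^ 2 ≤ sa ^ 2 * sb ^ 2 := by nlinarith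
    have hmix : c ^ 2 ≤ 1 / (1 + α) * (c * ((sa ^ 2 + sb ^ 2) / 2)) +
        α / (1 + α) * (sa ^ 2 * sb ^ 2) := by
      calc c ^ 2 = 1 / (1 + α) * c ^ 2 + α / (1 + α) * c ^ 2 := by field_simp
        _ ≤ _ := add_le_add (mul_le_mul_of_nonneg_left t1 w1)
            (mul_le_mul_of_nonneg_left hcab w2)
    have hpow : (c ^ 2) ^ r ≤ 1 / (1 + α) * (c * ((sa ^ 2 + sb ^ 2) / 2)) ^ r +
        α / (1 + α) * (sa ^ 2 * sb ^ 2) ^ r := by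
      calc (c ^ 2) ^ r ≤ (1 / (1 + α) * (c * ((sa ^ 2 + sb ^ 2) / 2)) +
          α / (1 + α) * (sa ^ 2 * sb ^ 2)) ^ r :=
            Real.rpow_le_rpow (by positivity) hmix hr0
        _ ≤ _ := convex2 w1 w2 hww (by positivity) (by positivity) hr
    -- bound the X term
    have hXterm : (c * ((sa ^ 2 + sb ^ 2) / 2)) ^ r ≤ N ^ r * (M2 / 2) := by
      rw [Real.mul_rpow hc0 (by positivity)]
      have hhc : ((sa ^ 2 + sb ^ 2) / 2) ^ r ≤ M2 / 2 := by
        calc ((sa ^ 2 + sb ^ 2) / 2) ^ r ≤ ((sa ^ 2) ^ r + (sb ^ 2) ^ r) / 2 :=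
              half_convex (by positivity) (by positivity) hr
          _ ≤ M2 / 2 := by linarith
      exact mul_le_mul hcNr hhc (by positivity) hNr0
    -- bound the Y term
    have hYterm : (sa ^ 2 * sb ^ 2) ^ r ≤ (M4 / 2 + V ^ r) / 2 := by
      calc (sa ^ 2 * sb ^ 2) ^ r ≤ ((D + v) / 2) ^ r :=
            Real.rpow_le_rpow (by positivity) hab hr0
        _ ≤ (D ^ r + v ^ r) / 2 := half_convex hD0 hv0 hr
        _ ≤ (M4 / 2 + V ^ r) / 2 := by
            have h1 : D ^ r ≤ M4 / 2 := hD l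
            have h2 : v ^ r ≤ V ^ r := Real.rpow_le_rpow hv0 hvV hr0
            linarith
    -- assembly
    have hc2r : c ^ (2 * r) = (c ^ 2) ^ r := by
      rw [Real.rpow_mul hc0]
      norm_cast
    rw [hc2r]
    calc (c ^ 2) ^ r ≤ 1 / (1 + α) * (c * ((sa ^ 2 + sb ^ 2) / 2)) ^ r +
          α / (1 + α) * (sa ^ 2 * sb ^ 2) ^ r := hpow
      _ ≤ 1 / (1 + α) * (N ^ r * (M2 / 2)) + α / (1 + α) * ((M4 / 2 + V ^ r) / 2) :=
          add_le_add (mul_le_mul_of_nonneg_left hXterm w1)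
            (mul_le_mul_of_nonneg_left hYterm w2)
      _ = 1 / (2 * (1 + α)) * N ^ r * M2 + α / (4 * (1 + α)) * M4 +
          α / (2 * (1 + α)) * V ^ r := by field_simp; ring
  · -- second inequality
    have h1 : α / (2 * (1 + α)) * V ^ r ≤ α / (2 * (1 + α)) * (M4 / 2) :=
      mul_le_mul_of_nonneg_left hVr (by positivity)
    have h2 : α / (2 * (1 + α)) * (M4 / 2) + α / (4 * (1 + α)) * M4
        = α / (2 * (1 + α)) * M4 := by field_simp; ring
    linarith
end

section
/- Let A and B be bounded linear operators on H. Then ber(A*B)² ≤ (1/3)·‖ |A|² + |B|² ‖_ber·ber(A*B) + (1/12)·‖ |A|⁴ + |B|⁴ ‖_ber + (1/6)·ber( |B|²·|A|² ), and this right-hand side is at most (1/6)·‖ |A|⁴ + |B|⁴ ‖_ber + (1/3)·ber(A*B)·‖ |A|² + |B|² ‖_ber. -/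
open ContinuousLinearMap
open scoped InnerProductSpace

set_option synthInstance.maxHeartbeats 1000000
set_option maxHeartbeats 1000000

section aux

variable {E : Type*} [NormedAddCommGroup E] [InnerProductSpace ℂ E]

/-- Buzano's inequality. -/
lemma buzano18 (x y e : E) (he : ‖e‖ = 1) :
    ‖⟪x, e⟫_ℂ * ⟪e, y⟫_ℂ‖ ≤ (1 / 2) * (‖x‖ * ‖y‖ + ‖⟪x, y⟫_ℂ‖) := by
  set z : E := ((2 : ℂ) * ⟪e, y⟫_ℂ) • e - y with hz
  have he' : ⟪e, e⟫_ℂ = 1 := by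
    rw [inner_self_eq_norm_sq_to_K, he]; norm_num
  have hzz : ⟪z, z⟫_ℂ = ⟪y, y⟫_ℂ := by
    simp only [hz, inner_sub_left, inner_sub_right, inner_smul_left, inner_smul_right, he',
      map_mul, Complex.conj_ofNat, mul_one]
    rw [← inner_conj_symm y e]
    ring
  have hnz : ‖z‖ = ‖y‖ := by
    have h3 : (‖z‖ : ℝ) ^ 2 = ‖y‖ ^ 2 := by
      have h2 := hzz
      rw [inner_self_eq_norm_sq_to_K, inner_self_eq_norm_sq_to_K] at h2
      exact_mod_cast h2
    calc ‖z‖ = Real.sqrt (‖z‖ ^ 2) := (Real.sqrt_sq (norm_nonneg z)).symm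
      _ = Real.sqrt (‖y‖ ^ 2) := by rw [h3]
      _ = ‖y‖ := Real.sqrt_sq (norm_nonneg y)
  have hxz : ⟪x, z⟫_ℂ = (2 : ℂ) * ⟪e, y⟫_ℂ * ⟪x, e⟫_ℂ - ⟪x, y⟫_ℂ := by
    simp [hz, inner_sub_right, inner_smul_right]
  have h1 : ‖(2 : ℂ) * ⟪e, y⟫_ℂ * ⟪x, e⟫_ℂ‖ ≤ ‖⟪x, z⟫_ℂ‖ + ‖⟪x, y⟫_ℂ‖ := by
    calc ‖(2 : ℂ) * ⟪e, y⟫_ℂ * ⟪x, e⟫_ℂ‖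
        = ‖⟪x, z⟫_ℂ + ⟪x, y⟫_ℂ‖ := by rw [hxz]; ring_nf
      _ ≤ ‖⟪x, z⟫_ℂ‖ + ‖⟪x, y⟫_ℂ‖ := norm_add_le _ _
  have h2 : ‖⟪x, z⟫_ℂ‖ ≤ ‖x‖ * ‖y‖ := by
    calc ‖⟪x, z⟫_ℂ‖ ≤ ‖x‖ * ‖z‖ := norm_inner_le_norm x z
      _ = ‖x‖ * ‖y‖ := by rw [hnz]
  have h3 : ‖(2 : ℂ) * ⟪e, y⟫_ℂ * ⟪x, e⟫_ℂ‖ = 2 * ‖⟪x, e⟫_ℂ * ⟪e, y⟫_ℂ‖ := by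
    rw [mul_assoc, norm_mul]
    simp [mul_comm, norm_mul]
  rw [h3] at h1
  linarith

end aux

section absop

variable {H : Type*} [NormedAddCommGroup H] [InnerProductSpace ℂ H] [CompleteSpace H]

lemma absOp_sq18 (A : H →L[ℂ] H) : (cfc Real.sqrt (adjoint A * A)) ^ 2 = adjoint A * A := by
  have h0 : (0 : H →L[ℂ] H) ≤ adjoint A * A := by
    rw [← star_eq_adjoint]; exact star_mul_self_nonneg A
  have hsa : IsSelfAdjoint (adjoint A * A) := h0.isSelfAdjoint
  rw [← cfc_pow Real.sqrt 2 (adjoint A * A) (by fun_prop) hsa]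
  rw [cfc_congr (g := id) ?_, cfc_id ℝ _ hsa]
  intro x hx
  have hx0 : 0 ≤ x := spectrum_nonneg_of_nonneg h0 hx
  simp [Real.sq_sqrt hx0]

end absop

theorem stmt18 {H : Type*} [NormedAddCommGroup H] [InnerProductSpace ℂ H] [CompleteSpace H]
    {Ω : Type*} [Nonempty Ω] (k : Ω → H) (hk : ∀ l, ‖k l‖ = 1)
    (A B : H →L[ℂ] H) :
    berNum k (adjoint A * B) ^ 2 ≤
      (1 / 3) * berNorm k ((absOp A) ^ 2 + (absOp B) ^ 2) * berNum k (adjoint A * B) +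
      (1 / 12) * berNorm k ((absOp A) ^ 4 + (absOp B) ^ 4) +
      (1 / 6) * berNum k ((absOp B) ^ 2 * (absOp A) ^ 2) ∧
    (1 / 3) * berNorm k ((absOp A) ^ 2 + (absOp B) ^ 2) * berNum k (adjoint A * B) +
      (1 / 12) * berNorm k ((absOp A) ^ 4 + (absOp B) ^ 4) +
      (1 / 6) * berNum k ((absOp B) ^ 2 * (absOp A) ^ 2) ≤
    (1 / 6) * berNorm k ((absOp A) ^ 4 + (absOp B) ^ 4) +
      (1 / 3) * berNum k (adjoint A * B) * berNorm k ((absOp A) ^ 2 + (absOp B) ^ 2) := by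
  have hA2 : (absOp A) ^ 2 = adjoint A * A := absOp_sq18 A
  have hB2 : (absOp B) ^ 2 = adjoint B * B := absOp_sq18 B
  have hA4 : (absOp A) ^ 4 = (adjoint A * A) ^ 2 := by
    rw [show (4 : ℕ) = 2 * 2 from rfl, pow_mul, hA2]
  have hB4 : (absOp B) ^ 4 = (adjoint B * B) ^ 2 := by
    rw [show (4 : ℕ) = 2 * 2 from rfl, pow_mul, hB2]
  set T : H →L[ℂ] H := adjoint A * A with hT
  set S : H →L[ℂ] H := adjoint B * B with hS
  have hTadj : adjoint T = T := by
    rw [← star_eq_adjoint]; simp [hT, star_mul, star_eq_adjoint, adjoint_adjoint]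
  have hSadj : adjoint S = S := by
    rw [← star_eq_adjoint]; simp [hS, star_mul, star_eq_adjoint, adjoint_adjoint]
  have hmove : ∀ (C : H →L[ℂ] H), adjoint C = C → ∀ u v : H, ⟪C u, v⟫_ℂ = ⟪u, C v⟫_ℂ := by
    intro C hC u v
    conv_lhs => rw [← hC]
    exact adjoint_inner_left C v u
  rw [hA2, hB2, hA4, hB4]
  -- boundedness of sups
  have hbN : ∀ C : H →L[ℂ] H,
      BddAbove (Set.range fun p : Ω × Ω => ‖⟪C (k p.1), k p.2⟫_ℂ‖) := by
    intro C
    refine ⟨‖C‖, ?_⟩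
    rintro _ ⟨p, rfl⟩
    calc ‖⟪C (k p.1), k p.2⟫_ℂ‖ ≤ ‖C (k p.1)‖ * ‖k p.2‖ := norm_inner_le_norm _ _
      _ ≤ ‖C‖ * ‖k p.1‖ * ‖k p.2‖ := by
          gcongr; exact le_opNorm C (k p.1)
      _ = ‖C‖ := by simp [hk]
  have hbn : ∀ C : H →L[ℂ] H,
      BddAbove (Set.range fun l : Ω => ‖⟪C (k l), k l⟫_ℂ‖) := by
    intro C
    refine ⟨‖C‖, ?_⟩
    rintro _ ⟨l, rfl⟩
    calc ‖⟪C (k l), k l⟫_ℂ‖ ≤ ‖C (k l)‖ * ‖k l‖ := norm_inner_le_norm _ _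
      _ ≤ ‖C‖ * ‖k l‖ * ‖k l‖ := by gcongr; exact le_opNorm C (k l)
      _ = ‖C‖ := by simp [hk]
  have hdiag : ∀ (C : H →L[ℂ] H) (l : Ω), ‖⟪C (k l), k l⟫_ℂ‖ ≤ berNorm k C := by
    intro C l
    exact le_ciSup (hbN C) (l, l)
  have hnum : ∀ (C : H →L[ℂ] H) (l : Ω), ‖⟪C (k l), k l⟫_ℂ‖ ≤ berNum k C := by
    intro C l
    exact le_ciSup (hbn C) l
  set m := berNum k (adjoint A * B) with hm
  set N1 := berNorm k (T + S) with hN1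
  set N2 := berNorm k (T ^ 2 + S ^ 2) with hN2
  set R := berNum k (S * T) with hR
  have hm0 : 0 ≤ m := Real.iSup_nonneg fun l => norm_nonneg _
  have hN10 : 0 ≤ N1 := Real.iSup_nonneg fun p => norm_nonneg _
  have hN20 : 0 ≤ N2 := Real.iSup_nonneg fun p => norm_nonneg _
  have hR0 : 0 ≤ R := Real.iSup_nonneg fun l => norm_nonneg _
  -- pointwise inner product computations
  have key : ∀ l : Ω,
      ‖⟪(adjoint A * B) (k l), k l⟫_ℂ‖ ^ 2 ≤
        (1 / 3) * N1 * m + (1 / 12) * N2 + (1 / 6) * R := by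
    intro l
    set e := k l with hel
    have he : ‖e‖ = 1 := hk l
    set s := ‖A e‖ with hs
    set t := ‖B e‖ with ht
    set c := ‖⟪(adjoint A * B) e, e⟫_ℂ‖ with hcdef
    set x := T e with hx
    set y := S e with hy
    have hTe : ⟪T e, e⟫_ℂ = ((s ^ 2 : ℝ) : ℂ) := by
      rw [hT, ContinuousLinearMap.mul_apply, adjoint_inner_left, inner_self_eq_norm_sq_to_K]
      norm_cast
    have hSe : ⟪S e, e⟫_ℂ = ((t ^ 2 : ℝ) : ℂ) := by
      rw [hS, ContinuousLinearMap.mul_apply, adjoint_inner_left, inner_self_eq_norm_sq_to_K]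
      norm_cast
    have hc : c ≤ s * t := by
      rw [hcdef, ContinuousLinearMap.mul_apply, adjoint_inner_left]
      calc ‖⟪B e, A e⟫_ℂ‖ ≤ ‖B e‖ * ‖A e‖ := norm_inner_le_norm _ _
        _ = s * t := by ring
    have hc0 : 0 ≤ c := norm_nonneg _
    -- diagonal values
    have hTS : ‖⟪(T + S) e, e⟫_ℂ‖ = s ^ 2 + t ^ 2 := by
      rw [add_apply, inner_add_left, hTe, hSe, ← Complex.ofReal_add, Complex.norm_real]
      rw [Real.norm_of_nonneg (by positivity)]
    have hT2e : ⟪(T ^ 2) e, e⟫_ℂ = ((‖x‖ ^ 2 : ℝ) : ℂ) := by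
      rw [sq, ContinuousLinearMap.mul_apply, hmove T hTadj, inner_self_eq_norm_sq_to_K]
      norm_cast
    have hS2e : ⟪(S ^ 2) e, e⟫_ℂ = ((‖y‖ ^ 2 : ℝ) : ℂ) := by
      rw [sq, ContinuousLinearMap.mul_apply, hmove S hSadj, inner_self_eq_norm_sq_to_K]
      norm_cast
    have hN2e : ‖⟪(T ^ 2 + S ^ 2) e, e⟫_ℂ‖ = ‖x‖ ^ 2 + ‖y‖ ^ 2 := by
      rw [add_apply, inner_add_left, hT2e, hS2e, ← Complex.ofReal_add, Complex.norm_real]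
      rw [Real.norm_of_nonneg (by positivity)]
    have hSTe : ⟪(S * T) e, e⟫_ℂ = ⟪x, y⟫_ℂ := by
      rw [ContinuousLinearMap.mul_apply, hmove S hSadj]
    -- Buzano applied to x, y
    have hxe : ⟪x, e⟫_ℂ = ((s ^ 2 : ℝ) : ℂ) := hTe
    have hey : ⟪e, y⟫_ℂ = ((t ^ 2 : ℝ) : ℂ) := by
      rw [← inner_conj_symm, hSe]
      simp
    have hbuz : s ^ 2 * t ^ 2 ≤ (1 / 2) * (‖x‖ * ‖y‖ + ‖⟪x, y⟫_ℂ‖) := by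
      have := buzano18 x y e he
      rw [hxe, hey, ← Complex.ofReal_mul, Complex.norm_real,
        Real.norm_of_nonneg (by positivity)] at this
      exact this
    -- scalar inequality
    have hscal : c ^ 2 ≤ (1 / 3) * (s ^ 2 + t ^ 2) * c + (1 / 12) * (‖x‖ ^ 2 + ‖y‖ ^ 2)
        + (1 / 6) * ‖⟪x, y⟫_ℂ‖ := by
      nlinarith [sq_nonneg (s - t), sq_nonneg (‖x‖ - ‖y‖), mul_nonneg hc0 (sq_nonneg (s - t)),
        mul_nonneg (sub_nonneg.2 hc) hc0, norm_nonneg (⟪x, y⟫_ℂ), hs ▸ norm_nonneg (A e),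
        ht ▸ norm_nonneg (B e)]
    -- bound by sups
    have h1 : s ^ 2 + t ^ 2 ≤ N1 := hTS ▸ hdiag (T + S) l
    have h2 : c ≤ m := hnum (adjoint A * B) l
    have h3 : ‖x‖ ^ 2 + ‖y‖ ^ 2 ≤ N2 := hN2e ▸ hdiag (T ^ 2 + S ^ 2) l
    have h4 : ‖⟪x, y⟫_ℂ‖ ≤ R := by
      have := hnum (S * T) l
      rw [hSTe] at this
      exact this
    have h5 : (s ^ 2 + t ^ 2) * c ≤ N1 * m :=
      mul_le_mul h1 h2 hc0 hN10
    calc c ^ 2 ≤ (1 / 3) * ((s ^ 2 + t ^ 2) * c) + (1 / 12) * (‖x‖ ^ 2 + ‖y‖ ^ 2)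
        + (1 / 6) * ‖⟪x, y⟫_ℂ‖ := by linarith [hscal]
      _ ≤ (1 / 3) * (N1 * m) + (1 / 12) * N2 + (1 / 6) * R := by
          gcongr
      _ = (1 / 3) * N1 * m + (1 / 12) * N2 + (1 / 6) * R := by ring
  set K := (1 / 3) * N1 * m + (1 / 12) * N2 + (1 / 6) * R with hK
  have hK0 : 0 ≤ K := by
    have : 0 ≤ N1 * m := mul_nonneg hN10 hm0
    rw [hK]; nlinarith
  have hmK : m ^ 2 ≤ K := by
    have hle : m ≤ Real.sqrt K := by
      refine ciSup_le fun l => ?_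
      have := key l
      calc ‖⟪(adjoint A * B) (k l), k l⟫_ℂ‖
          = Real.sqrt (‖⟪(adjoint A * B) (k l), k l⟫_ℂ‖ ^ 2) :=
            (Real.sqrt_sq (norm_nonneg _)).symm
        _ ≤ Real.sqrt K := Real.sqrt_le_sqrt this
    calc m ^ 2 ≤ Real.sqrt K ^ 2 := by
          exact pow_le_pow_left₀ hm0 hle 2
      _ = K := Real.sq_sqrt hK0
  -- second inequality: R ≤ N2 / 2
  have hRN2 : R ≤ N2 / 2 := by
    refine ciSup_le fun l => ?_
    set e := k l
    have h1 : ⟪(S * T) e, e⟫_ℂ = ⟪T e, S e⟫_ℂ := by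
      rw [ContinuousLinearMap.mul_apply, hmove S hSadj]
    have h2 : ‖⟪(T ^ 2 + S ^ 2) e, e⟫_ℂ‖ = ‖T e‖ ^ 2 + ‖S e‖ ^ 2 := by
      rw [add_apply, inner_add_left]
      rw [show ⟪(T ^ 2) e, e⟫_ℂ = ((‖T e‖ ^ 2 : ℝ) : ℂ) by
        rw [sq, ContinuousLinearMap.mul_apply, hmove T hTadj, inner_self_eq_norm_sq_to_K]
        norm_cast]
      rw [show ⟪(S ^ 2) e, e⟫_ℂ = ((‖S e‖ ^ 2 : ℝ) : ℂ) by
        rw [sq, ContinuousLinearMap.mul_apply, hmove S hSadj, inner_self_eq_norm_sq_to_K]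
        norm_cast]
      rw [← Complex.ofReal_add, Complex.norm_real, Real.norm_of_nonneg (by positivity)]
    have h3 : ‖T e‖ ^ 2 + ‖S e‖ ^ 2 ≤ N2 := h2 ▸ hdiag (T ^ 2 + S ^ 2) l
    have h4 : ‖⟪(S * T) e, e⟫_ℂ‖ ≤ ‖T e‖ * ‖S e‖ := by
      rw [h1]; exact norm_inner_le_norm _ _
    nlinarith [sq_nonneg (‖T e‖ - ‖S e‖)]
  constructor
  · exact hmK
  · rw [hK] at *
    nlinarith [mul_nonneg hN10 hm0]
end
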